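/- Let t_n be the Lie algebra with generators t_{ij} = t_{ji} (1 ≤ i < j ≤ n) subject to [t_{ij}, t_{kl}] = 0 when {i,j,k,l} has 4 elements and [t_{ij}, t_{ik}+t_{jk}] = 0 when {i,j,k} has 3 elements. Then for any finite-dimensional complex semisimple Lie algebra g with representations ρ₁,...,ρₙ on V₁,...,Vₙ, the assignment t_{ij} ↦ (ρ₁⊗...⊗ρₙ)(λ^{ij}(Ω)) extends to a Lie algebra homomorphism t_n → End(V₁⊗...⊗Vₙ). -/

import Mathlib

/-!
Write `ρ_k(x)` for `x ∈ g` acting on the `k`-th tensor factor, so that `t_{ij}` is sent to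
`Ω_{ij} = Σ_μ ρ_i(I_μ) ρ_j(I_μ)`. Actions on different factors commute, which gives
`Ω_{ij} = Ω_{ji}` and `[Ω_{ij}, Ω_{kl}] = 0` for disjoint pairs. Invariance of the Killing form
makes the Casimir tensor `Σ_μ I_μ ⊗ I_μ` ad-invariant, i.e. `Ω_{ij}` commutes with the diagonal
action `ρ_i(y) + ρ_j(y)`; since `Ω_{ik} + Ω_{jk} = Σ_ν (ρ_i(I_ν) + ρ_j(I_ν)) ρ_k(I_ν)` and
`ρ_k` commutes with `Ω_{ij}`, this gives `[Ω_{ij}, Ω_{ik} + Ω_{jk}] = 0`.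
-/

open TensorProduct PiTensorProduct

attribute [local instance 100] LieRing.ofAssociativeRing

/-- The defining relations of the Kohno–Drinfeld Lie algebra `t_n`, as elements of the free
Lie algebra on symbols `t_{ij}` indexed by pairs `(i,j)`: the symmetry relations
`t_{ij} = t_{ji}`, the commutation relations `[t_{ij}, t_{kl}] = 0` for `#{i,j,k,l} = 4`,
and `[t_{ij}, t_{ik} + t_{jk}] = 0` for `#{i,j,k} = 3`. -/
def kdRels (n : ℕ) : Set (FreeLieAlgebra ℂ (Fin n × Fin n)) :=
  {x | (∃ i j : Fin n, i ≠ j ∧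
          x = FreeLieAlgebra.of ℂ (i, j) - FreeLieAlgebra.of ℂ (j, i)) ∨
       (∃ i j k l : Fin n, i ≠ j ∧ i ≠ k ∧ i ≠ l ∧ j ≠ k ∧ j ≠ l ∧ k ≠ l ∧
          x = ⁅FreeLieAlgebra.of ℂ (i, j), FreeLieAlgebra.of ℂ (k, l)⁆) ∨
       (∃ i j k : Fin n, i ≠ j ∧ j ≠ k ∧ i ≠ k ∧
          x = ⁅FreeLieAlgebra.of ℂ (i, j),
                FreeLieAlgebra.of ℂ (i, k) + FreeLieAlgebra.of ℂ (j, k)⁆)}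

/-- The Kohno–Drinfeld Lie algebra `t_n`: the quotient of the free Lie algebra on the `t_{ij}`
by the Lie ideal generated by the defining relations. -/
abbrev KohnoDrinfeld (n : ℕ) :=
  FreeLieAlgebra ℂ (Fin n × Fin n) ⧸
    LieSubmodule.lieSpan ℂ (FreeLieAlgebra ℂ (Fin n × Fin n)) (kdRels n)

/-- The generator `t_{ij}` of the Kohno–Drinfeld Lie algebra. -/
noncomputable def kdGen {n : ℕ} (i j : Fin n) : KohnoDrinfeld n :=
  LieSubmodule.Quotient.mk (FreeLieAlgebra.of ℂ (i, j))

namespace LieIdeal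

variable {R L L' : Type*} [CommRing R] [LieRing L] [LieAlgebra R L] [LieRing L'] [LieAlgebra R L']

def liftQ (I : LieIdeal R L) (f : L →ₗ⁅R⁆ L') (h : I ≤ f.ker) : L ⧸ I →ₗ⁅R⁆ L' where
  toLinearMap := I.toSubmodule.liftQ f fun x hx => LinearMap.mem_ker.mpr (f.mem_ker.mp (h hx))
  map_lie' {x y} := by
    obtain ⟨x, rfl⟩ := LieSubmodule.Quotient.surjective_mk' I x
    obtain ⟨y, rfl⟩ := LieSubmodule.Quotient.surjective_mk' I y
    exact f.map_lie x y

@[simp]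
theorem liftQ_mk (I : LieIdeal R L) (f : L →ₗ⁅R⁆ L') (h : I ≤ f.ker) (x : L) :
    I.liftQ f h (LieSubmodule.Quotient.mk x) = f x :=
  rfl

end LieIdeal

namespace PiTensorProduct

variable {ι R : Type*} [DecidableEq ι] [CommRing R] {s : ι → Type*} [∀ k, AddCommGroup (s k)]
  [∀ k, Module R (s k)]

noncomputable def mapMulSingle (i : ι) : Module.End R (s i) →ₐ[R] Module.End R (⨂[R] k, s k) :=
  AlgHom.ofLinearMap
    { toFun := fun f => map (Pi.mulSingle i f)
      map_add' := by intro f g; exact PiTensorProduct.map_update_add (f := 1) i f g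
      map_smul' := by intro c f; exact PiTensorProduct.map_update_smul (f := 1) i c f }
    (show map (Pi.mulSingle i 1) = 1 by
      rw [Pi.mulSingle_one]; exact PiTensorProduct.map_one)
    fun f g =>
      show map (Pi.mulSingle i (f * g)) = map (Pi.mulSingle i f) * map (Pi.mulSingle i g) by
      rw [Pi.mulSingle_mul, ← PiTensorProduct.map_mul]; rfl

theorem mapMulSingle_apply (i : ι) (f : Module.End R (s i)) :
    mapMulSingle i f = map (Pi.mulSingle i f) :=
  rfl

theorem commute_mapMulSingle {i j : ι} (hij : i ≠ j) (f : Module.End R (s i))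
    (g : Module.End R (s j)) : Commute (mapMulSingle i f) (mapMulSingle j g) := by
  have h := congrArg (mapMonoidHom (R := R) (s := s)) (Pi.mulSingle_commute hij f g).eq
  rwa [map_mul, map_mul] at h

theorem map_ite_or_eq_mul {i j : ι} (hij : i ≠ j) (T : ∀ k, Module.End R (s k)) :
    map (fun k => if k = i ∨ k = j then T k else LinearMap.id) =
      mapMulSingle i (T i) * mapMulSingle j (T j) := by
  rw [mapMulSingle_apply, mapMulSingle_apply, ← PiTensorProduct.map_mul]
  congr 1
  funext k
  by_cases hi : k = i
  · subst hi; simp [Pi.mulSingle_eq_of_ne hij]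
  by_cases hj : k = j
  · subst hj; simp [Pi.mulSingle_eq_of_ne hi]
  · simp [hi, hj, Pi.mulSingle_eq_of_ne]; rfl

end PiTensorProduct

section Casimir

open Finset

variable {R L M κ : Type*} [CommRing R] [LieRing L] [LieAlgebra R L] [AddCommGroup M] [Module R M]
  [DecidableEq κ] {B : LinearMap.BilinForm R L} {b : Module.Basis κ R L}

theorem Module.Basis.repr_eq_bilinForm_basis_right
    (hb : ∀ μ ν, B (b μ) (b ν) = if μ = ν then 1 else 0) (y : L) (ν : κ) :
    b.repr y ν = B y (b ν) :=
  LinearMap.congr_fun (b.ext (f₁ := b.coord ν) (f₂ := B.flip (b ν))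
    fun μ => by simp [hb, Finsupp.single_apply]) y

theorem Module.Basis.repr_eq_bilinForm_basis_left
    (hb : ∀ μ ν, B (b μ) (b ν) = if μ = ν then 1 else 0) (y : L) (ν : κ) :
    b.repr y ν = B (b ν) y :=
  LinearMap.congr_fun (b.ext (f₁ := b.coord ν) (f₂ := B (b ν))
    fun μ => by simp [hb, Finsupp.single_apply, eq_comm]) y

theorem casimir_lie_invariant [Fintype κ] (hB : B.lieInvariant L)
    (hb : ∀ μ ν, B (b μ) (b ν) = if μ = ν then 1 else 0) (f : L →ₗ[R] L →ₗ[R] M) (x : L) :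
    ∑ μ, (f ⁅x, b μ⁆ (b μ) + f (b μ) ⁅x, b μ⁆) = 0 := by
  have expand_left (μ : κ) : f ⁅x, b μ⁆ (b μ) = ∑ ν, B ⁅x, b μ⁆ (b ν) • f (b ν) (b μ) := by
    conv_lhs => rw [← b.sum_repr ⁅x, b μ⁆]
    simp [b.repr_eq_bilinForm_basis_right hb]
  have expand_right (μ : κ) : f (b μ) ⁅x, b μ⁆ = -∑ ν, B ⁅x, b ν⁆ (b μ) • f (b μ) (b ν) := by
    conv_lhs => rw [← b.sum_repr ⁅x, b μ⁆]
    simp [b.repr_eq_bilinForm_basis_left hb, hB x]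
  -- the coefficients `B ⁅x, b μ⁆ (b ν)` of `ad x` are skew-symmetric, so the double sums cancel
  rw [sum_add_distrib, sum_congr rfl fun μ _ => expand_left μ,
    sum_congr rfl fun μ _ => expand_right μ, sum_neg_distrib, sum_comm, add_neg_cancel]

end Casimir

section Relations

open Finset

variable {R L A ι κ : Type*} [CommRing R] [LieRing L] [LieAlgebra R L] [Ring A] [Algebra R A]
  [Fintype κ]

theorem lie_mul_of_commute {a x y : A} (h : Commute a y) : ⁅a, x * y⁆ = ⁅a, x⁆ * y := by
  rw [Ring.lie_def, Ring.lie_def, sub_mul, mul_assoc x y a, ← h.eq, mul_assoc, mul_assoc]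

theorem mul_lie_add_of_commute {a c d e : A} (hcd : Commute c d) (hae : Commute a e) :
    ⁅a * c, d + e⁆ = ⁅a, d⁆ * c + a * ⁅c, e⁆ := by
  have h₁ : a * c * d = a * d * c := by rw [mul_assoc, hcd.eq, ← mul_assoc]
  have h₂ : e * (a * c) = a * e * c := by rw [← mul_assoc, ← hae.eq]
  rw [Ring.lie_def, Ring.lie_def, Ring.lie_def, mul_add, add_mul, h₁, h₂]
  noncomm_ring

/-- The image of `λ^{ij}(Ω)`, with `Ω = Σ_μ b_μ ⊗ b_μ`, under the representations `ρ`. -/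
noncomputable def casimirAt (ρ : ι → L →ₗ⁅R⁆ A) (b : Module.Basis κ R L) (i j : ι) : A :=
  ∑ μ, ρ i (b μ) * ρ j (b μ)

variable {ρ : ι → L →ₗ⁅R⁆ A} {B : LinearMap.BilinForm R L} {i j k l : ι}

theorem casimirAt_symm (hρ : Pairwise fun i j => ∀ x y, Commute (ρ i x) (ρ j y))
    (b : Module.Basis κ R L) (hij : i ≠ j) : casimirAt ρ b i j = casimirAt ρ b j i :=
  sum_congr rfl fun _ _ => (hρ hij _ _).eq

theorem commute_casimirAt (hρ : Pairwise fun i j => ∀ x y, Commute (ρ i x) (ρ j y))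
    (b : Module.Basis κ R L) (hik : i ≠ k) (hil : i ≠ l) (hjk : j ≠ k) (hjl : j ≠ l) :
    Commute (casimirAt ρ b i j) (casimirAt ρ b k l) :=
  .sum_left _ _ _ fun _ _ => .sum_right _ _ _ fun _ _ =>
    ((hρ hik _ _).mul_right (hρ hil _ _)).mul_left ((hρ hjk _ _).mul_right (hρ hjl _ _))

theorem lie_casimirAt_add_eq_zero [DecidableEq κ]
    (hρ : Pairwise fun i j => ∀ x y, Commute (ρ i x) (ρ j y)) {b : Module.Basis κ R L}
    (hB : B.lieInvariant L) (hb : ∀ μ ν, B (b μ) (b ν) = if μ = ν then 1 else 0) (hij : i ≠ j)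
    (y : L) :
    ⁅casimirAt ρ b i j, ρ i y + ρ j y⁆ = 0 := by
  have hinv := casimir_lie_invariant hB hb ((LinearMap.mul R A).compl₁₂ (ρ i : L →ₗ[R] A) (ρ j)) y
  simp only [LinearMap.compl₁₂_apply, LinearMap.mul_apply', LieHom.coe_toLinearMap] at hinv
  rw [casimirAt, sum_lie, ← neg_eq_zero, ← sum_neg_distrib, ← hinv]
  refine sum_congr rfl fun μ _ => ?_
  rw [mul_lie_add_of_commute (hρ hij.symm _ _) (hρ hij _ _), ← LieHom.map_lie, ← LieHom.map_lie,
    ← lie_skew y, map_neg, map_neg, neg_mul, mul_neg, neg_add]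

theorem lie_casimirAt_casimirAt_add_eq_zero [DecidableEq κ]
    (hρ : Pairwise fun i j => ∀ x y, Commute (ρ i x) (ρ j y)) {b : Module.Basis κ R L}
    (hB : B.lieInvariant L) (hb : ∀ μ ν, B (b μ) (b ν) = if μ = ν then 1 else 0) (hij : i ≠ j)
    (hik : i ≠ k) (hjk : j ≠ k) :
    ⁅casimirAt ρ b i j, casimirAt ρ b i k + casimirAt ρ b j k⁆ = 0 := by
  have hsum : casimirAt ρ b i k + casimirAt ρ b j k =
      ∑ ν, (ρ i (b ν) + ρ j (b ν)) * ρ k (b ν) := by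
    simp only [casimirAt, add_mul, sum_add_distrib]
  rw [hsum, lie_sum]
  refine sum_eq_zero fun ν _ => ?_
  rw [lie_mul_of_commute, lie_casimirAt_add_eq_zero hρ hB hb hij, zero_mul]
  exact .sum_left _ _ _ fun _ _ => (hρ hik _ _).mul_left (hρ hjk _ _)

end Relations

namespace KohnoDrinfeld

variable {n : ℕ} {M : Type*} [LieRing M] [LieAlgebra ℂ M]

noncomputable def lift (F : Fin n → Fin n → M) (h_symm : ∀ i j, i ≠ j → F i j = F j i)
    (h_comm : ∀ i j k l, i ≠ j → i ≠ k → i ≠ l → j ≠ k → j ≠ l → k ≠ l → ⁅F i j, F k l⁆ = 0)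
    (h_lie : ∀ i j k, i ≠ j → j ≠ k → i ≠ k → ⁅F i j, F i k + F j k⁆ = 0) :
    KohnoDrinfeld n →ₗ⁅ℂ⁆ M :=
  LieIdeal.liftQ _ (FreeLieAlgebra.lift ℂ (Function.uncurry F)) <|
    LieSubmodule.lieSpan_le.mpr <| by
      rintro x (⟨i, j, hij, rfl⟩ | ⟨i, j, k, l, hij, hik, hil, hjk, hjl, hkl, rfl⟩ |
        ⟨i, j, k, hij, hjk, hik, rfl⟩) <;>
      simp only [SetLike.mem_coe, LieHom.mem_ker, map_sub, map_add, LieHom.map_lie,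
        FreeLieAlgebra.lift_of_apply, Function.uncurry_apply_pair]
      · rw [h_symm i j hij, sub_self]
      · exact h_comm i j k l hij hik hil hjk hjl hkl
      · exact h_lie i j k hij hjk hik

theorem lift_kdGen (F : Fin n → Fin n → M) (h_symm h_comm h_lie) (i j : Fin n) :
    lift F h_symm h_comm h_lie (kdGen i j) = F i j :=
  (LieIdeal.liftQ_mk _ _ _ _).trans (FreeLieAlgebra.lift_of_apply (Function.uncurry F) (i, j))

end KohnoDrinfeld

theorem kohnoDrinfeld_representation_general (g : Type) [LieRing g] [LieAlgebra ℂ g]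
    [Module.Finite ℂ g] (m : ℕ) (b : Module.Basis (Fin m) ℂ g)
    (hb : ∀ μ ν, killingForm ℂ g (b μ) (b ν) = if μ = ν then 1 else 0)
    (n : ℕ) (V : Fin n → Type) [∀ k, AddCommGroup (V k)] [∀ k, Module ℂ (V k)]
    [∀ k, LieRingModule g (V k)] [∀ k, LieModule ℂ g (V k)] :
    ∃ φ : KohnoDrinfeld n →ₗ⁅ℂ⁆ Module.End ℂ (⨂[ℂ] k, V k),
      ∀ i j : Fin n, i ≠ j →
        φ (kdGen i j) =
          ∑ μ, PiTensorProduct.map fun k =>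
            if k = i ∨ k = j then LieModule.toEnd ℂ g (V k) (b μ) else LinearMap.id := by
  let ρ (k : Fin n) : g →ₗ⁅ℂ⁆ Module.End ℂ (⨂[ℂ] k, V k) :=
    (mapMulSingle k).toLieHom.comp (LieModule.toEnd ℂ g (V k))
  have hρ : Pairwise fun i j => ∀ x y, Commute (ρ i x) (ρ j y) :=
    fun i j hij x y => commute_mapMulSingle hij _ _
  have hB : (killingForm ℂ g).lieInvariant g := LieModule.traceForm_lieInvariant ℂ g g
  refine ⟨KohnoDrinfeld.lift (casimirAt ρ b) (fun i j hij => casimirAt_symm hρ b hij)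
    (fun i j k l _ hik hil hjk hjl _ => (commute_casimirAt hρ b hik hil hjk hjl).lie_eq)
    (fun i j k hij hjk hik => lie_casimirAt_casimirAt_add_eq_zero hρ hB hb hij hik hjk),
    fun i j hij => ?_⟩
  rw [KohnoDrinfeld.lift_kdGen, casimirAt]
  exact Finset.sum_congr rfl fun μ _ =>
    (map_ite_or_eq_mul hij fun k => LieModule.toEnd ℂ g (V k) (b μ)).symm

/-- Given representations `ρ₁, …, ρₙ` of a finite-dimensional complex semisimple Lie algebra
`g` on `V₁, …, Vₙ` and an orthonormal basis `{I_μ}` for the Killing form, the assignment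
`t_{ij} ↦ (ρ₁⊗⋯⊗ρₙ)(λ^{ij}(Ω))` (i.e. `Σ_μ` acting by `I_μ` on factors `i` and `j` and the
identity elsewhere) extends to a Lie algebra homomorphism
`t_n → End(V₁ ⊗ ⋯ ⊗ Vₙ)`. -/
theorem kohnoDrinfeld_representation (g : Type) [LieRing g] [LieAlgebra ℂ g]
    [Module.Finite ℂ g] [LieAlgebra.IsSemisimple ℂ g] (m : ℕ) (b : Module.Basis (Fin m) ℂ g)
    (hb : ∀ μ ν, killingForm ℂ g (b μ) (b ν) = if μ = ν then 1 else 0)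
    (n : ℕ) (V : Fin n → Type) [∀ k, AddCommGroup (V k)] [∀ k, Module ℂ (V k)]
    [∀ k, LieRingModule g (V k)] [∀ k, LieModule ℂ g (V k)] :
    ∃ φ : KohnoDrinfeld n →ₗ⁅ℂ⁆ Module.End ℂ (⨂[ℂ] k, V k),
      ∀ i j : Fin n, i ≠ j →
        φ (kdGen i j) =
          ∑ μ, PiTensorProduct.map fun k =>
            if k = i ∨ k = j then LieModule.toEnd ℂ g (V k) (b μ) else LinearMap.id :=
  kohnoDrinfeld_representation_general g m b hb n V
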